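/- arXiv:1305.3879 — 2 statements merged into one kernel-verified Lean document; each statement's English description precedes it below -/
import Mathlib

section
/- Let A > 0, T > 0, and τ with (2π/T)τ ≠ kπ for all integers k. Every point (x,y) of the delay embedding {(A sin((2π/T)t), A sin((2π/T)(t+τ))) : t ∈ ℝ} satisfies x² − 2cos((2π/T)τ)xy + y² = A² sin²((2π/T)τ), and conversely every point of this conic lies in the delay embedding; hence the embedding is an ellipse centered at the origin with semi-axes A√(1 ± cos((2π/T)τ)). -/
open Real Set

/-!
With `φ = 2πτ/T`, the delay coordinates are `x = A sin θ` and `y = A sin (θ + φ) = x cos φ + A cos θ sin φ`.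
Hence `(A cos θ, A sin θ) = ((y - x cos φ) / sin φ, x)`, and `cos² θ + sin² θ = 1` becomes the conic
equation after multiplying by `sin² φ`. Conversely, a point of the conic gives a point
`((y - x cos φ) / sin φ, x)` on the circle of radius `A`, whose polar angle is the required phase.
-/

theorem exists_eq_mul_cos_and_eq_mul_sin {u v r : ℝ} (hr : 0 ≤ r) (h : u ^ 2 + v ^ 2 = r ^ 2) :
    ∃ θ : ℝ, u = r * cos θ ∧ v = r * sin θ := by
  have hnorm : ‖(⟨u, v⟩ : ℂ)‖ = r := by
    rw [Complex.norm_def, Complex.normSq_mk, ← Real.sqrt_sq hr]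
    congr 1
    linear_combination h
  refine ⟨Complex.arg ⟨u, v⟩, ?_, ?_⟩
  · rw [← hnorm, Complex.norm_mul_cos_arg]
  · rw [← hnorm, Complex.norm_mul_sin_arg]

def delayEllipse (A φ : ℝ) : Set (ℝ × ℝ) :=
  {p | p.1 ^ 2 - 2 * cos φ * (p.1 * p.2) + p.2 ^ 2 = A ^ 2 * sin φ ^ 2}

theorem delay_mem_delayEllipse (A θ φ : ℝ) :
    (A * sin θ, A * sin (θ + φ)) ∈ delayEllipse A φ := by
  simp only [delayEllipse, mem_ofPred_eq, sin_add]
  linear_combination (-A ^ 2 * sin θ ^ 2) * sin_sq_add_cos_sq φ +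
    (A ^ 2 * sin φ ^ 2) * sin_sq_add_cos_sq θ

theorem exists_delay_eq_of_mem_delayEllipse {A φ : ℝ} (hA : 0 ≤ A) (hφ : sin φ ≠ 0)
    {p : ℝ × ℝ} (hp : p ∈ delayEllipse A φ) :
    ∃ θ : ℝ, (A * sin θ, A * sin (θ + φ)) = p := by
  obtain ⟨x, y⟩ := p
  simp only [delayEllipse, mem_ofPred_eq] at hp
  have hcircle : ((y - cos φ * x) / sin φ) ^ 2 + x ^ 2 = A ^ 2 := by
    field_simp
    linear_combination hp + x ^ 2 * sin_sq_add_cos_sq φ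
  obtain ⟨θ, hcos, hsin⟩ := exists_eq_mul_cos_and_eq_mul_sin hA hcircle
  refine ⟨θ, ?_⟩
  rw [sin_add, Prod.mk.injEq, ← hsin]
  refine ⟨rfl, ?_⟩
  rw [mul_add, ← mul_assoc, ← mul_assoc, ← hsin, ← hcos]
  field_simp
  ring

theorem range_delay_eq_delayEllipse {A φ : ℝ} (hA : 0 ≤ A) (hφ : sin φ ≠ 0) :
    range (fun θ => (A * sin θ, A * sin (θ + φ))) = delayEllipse A φ :=
  Subset.antisymm (range_subset_iff.2 fun θ => delay_mem_delayEllipse A θ φ)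
    fun _ hp => exists_delay_eq_of_mem_delayEllipse hA hφ hp

theorem stmt5_general (A T τ : ℝ) (hA : 0 < A)
    (hτ : ∀ k : ℤ, 2 * π / T * τ ≠ k * π) :
    {p : ℝ × ℝ | ∃ t : ℝ, p = (A * sin (2 * π / T * t), A * sin (2 * π / T * (t + τ)))} =
      {p : ℝ × ℝ | p.1 ^ 2 - 2 * cos (2 * π / T * τ) * (p.1 * p.2) + p.2 ^ 2
        = A ^ 2 * (sin (2 * π / T * τ)) ^ 2} := by
  set ω := 2 * π / T
  have hω : ω ≠ 0 := fun h => hτ 0 (by simp [h])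
  have hφ : sin (ω * τ) ≠ 0 := sin_ne_zero_iff.2 fun n hn => hτ n hn.symm
  have hreparam : {p : ℝ × ℝ | ∃ t : ℝ, p = (A * sin (ω * t), A * sin (ω * (t + τ)))} =
      range ((fun θ => (A * sin θ, A * sin (θ + ω * τ))) ∘ (ω * ·)) := by
    ext p
    simp only [mem_ofPred_eq, mem_range, Function.comp_apply, mul_add, eq_comm]
  rw [hreparam, range_comp, (mul_left_surjective₀ hω).range_eq, image_univ,
    range_delay_eq_delayEllipse hA.le hφ]
  rfl

theorem stmt5 (A T τ : ℝ) (hA : 0 < A) (hT : 0 < T)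
    (hτ : ∀ k : ℤ, 2 * π / T * τ ≠ k * π) :
    {p : ℝ × ℝ | ∃ t : ℝ, p = (A * sin (2 * π / T * t), A * sin (2 * π / T * (t + τ)))} =
      {p : ℝ × ℝ | p.1 ^ 2 - 2 * cos (2 * π / T * τ) * (p.1 * p.2) + p.2 ^ 2
        = A ^ 2 * (sin (2 * π / T * τ)) ^ 2} :=
  stmt5_general A T τ hA hτ
end

section
/- Let A > 0, T1, T2 > 0 with T1 ≠ T2, and τ1, τ2 > 0. If the delay embedding sets U1 = {(A sin((2π/T1)t), A sin((2π/T1)(t+τ1))) : t ∈ ℝ} and U2 = {(A sin((2π/T2)t), A sin((2π/T2)(t+τ2))) : t ∈ ℝ} are equal, and (2π/T_i)τ_i is not an integer multiple of π for i = 1,2, then cos((2π/T1)τ1) = ±cos((2π/T2)τ2). -/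
/-!
The point of `U_i` with maximal first coordinate `A` is attained where `sin (ω_i t) = 1`, hence
`cos (ω_i t) = 0`, so its second coordinate is `A sin (ω_i t + ω_i τ_i) = A cos (ω_i τ_i)`.
Equal sets have equal such points, so the cosines agree.
-/

open Real

def sineDelaySet (A ω τ : ℝ) : Set (ℝ × ℝ) :=
  {p | ∃ t : ℝ, p = (A * sin (ω * t), A * sin (ω * (t + τ)))}

lemma Real.sin_add_of_sin_eq_one {x : ℝ} (hx : sin x = 1) (y : ℝ) : sin (x + y) = cos y := by
  have hcos : cos x = 0 := by nlinarith [sin_sq_add_cos_sq x, sq_nonneg (cos x)]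
  rw [sin_add, hx, hcos]
  ring

lemma mk_cos_mem_sineDelaySet (A τ : ℝ) {ω : ℝ} (hω : ω ≠ 0) :
    (A, A * cos (ω * τ)) ∈ sineDelaySet A ω τ := by
  refine ⟨π / 2 / ω, ?_⟩
  have hpeak : ω * (π / 2 / ω) = π / 2 := by field_simp
  rw [mul_add, hpeak, sin_pi_div_two, sin_add_of_sin_eq_one sin_pi_div_two, mul_one]

lemma eq_mul_cos_of_mk_mem_sineDelaySet {A ω τ y : ℝ} (hA : A ≠ 0)
    (h : (A, y) ∈ sineDelaySet A ω τ) : y = A * cos (ω * τ) := by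
  obtain ⟨t, ht⟩ := h
  obtain ⟨hfst, hsnd⟩ := Prod.mk.inj ht
  have hpeak : sin (ω * t) = 1 :=
    (mul_left_cancel₀ hA (by rw [mul_one]; exact hfst)).symm
  rw [hsnd, mul_add, sin_add_of_sin_eq_one hpeak]

theorem stmt7_general (A T1 T2 τ1 τ2 : ℝ) (hA : 0 < A) (hT1 : 0 < T1)
    (heq : {p : ℝ × ℝ | ∃ t : ℝ,
        p = (A * sin (2 * π / T1 * t), A * sin (2 * π / T1 * (t + τ1)))} =
      {p : ℝ × ℝ | ∃ t : ℝ,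
        p = (A * sin (2 * π / T2 * t), A * sin (2 * π / T2 * (t + τ2)))}) :
    cos (2 * π / T1 * τ1) = cos (2 * π / T2 * τ2) ∨
      cos (2 * π / T1 * τ1) = -cos (2 * π / T2 * τ2) := by
  change sineDelaySet A _ τ1 = sineDelaySet A _ τ2 at heq
  have hω1 : 2 * π / T1 ≠ 0 := by positivity
  have hmem := mk_cos_mem_sineDelaySet A τ1 hω1
  rw [heq] at hmem
  exact Or.inl (mul_left_cancel₀ hA.ne' (eq_mul_cos_of_mk_mem_sineDelaySet hA.ne' hmem))

theorem stmt7 (A T1 T2 τ1 τ2 : ℝ) (hA : 0 < A) (hT1 : 0 < T1) (hT2 : 0 < T2)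
    (hT : T1 ≠ T2) (hτ1 : 0 < τ1) (hτ2 : 0 < τ2)
    (hk1 : ∀ k : ℤ, 2 * π / T1 * τ1 ≠ k * π) (hk2 : ∀ k : ℤ, 2 * π / T2 * τ2 ≠ k * π)
    (heq : {p : ℝ × ℝ | ∃ t : ℝ,
        p = (A * sin (2 * π / T1 * t), A * sin (2 * π / T1 * (t + τ1)))} =
      {p : ℝ × ℝ | ∃ t : ℝ,
        p = (A * sin (2 * π / T2 * t), A * sin (2 * π / T2 * (t + τ2)))}) :
    cos (2 * π / T1 * τ1) = cos (2 * π / T2 * τ2) ∨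
      cos (2 * π / T1 * τ1) = -cos (2 * π / T2 * τ2) :=
  stmt7_general A T1 T2 τ1 τ2 hA hT1 heq
end
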